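/- The four-dimensional algebra C with basis e1, e2, e3, e4 and nonzero products e1e1 = e4e4 = e2, e1e2 = e3 is nilpotent of index 4 (all products of any four elements vanish), and satisfies the left-anticommutativity identity (ab)c + (ba)c = 0 and the di-Malcev identity a(b(cd)) - b(c(ad)) - c((ab)d) - (ac)(bd) - (a(bc))d = 0; hence C is a Malcev dialgebra that is not a binary Leibniz algebra. -/

import Mathlib

/-- Multiplication of the 4-dimensional algebra C with e1e1 = e2, e4e4 = e2,
e1e2 = e3 (extended bilinearly); basis vectors are indexed 0,1,2,3. -/
def mulC {K : Type*} [Field K] (v w : Fin 4 → K) : Fin 4 → K :=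
  ![0, v 0 * w 0 + v 3 * w 3, v 0 * w 1, 0]

/-- The Leibniz discriminant ⟨a,b,c⟩ with respect to mulC. -/
def ltC {K : Type*} [Field K] (a b c : Fin 4 → K) : Fin 4 → K :=
  mulC (mulC a b) c - mulC a (mulC b c) + mulC b (mulC a c)

/-!
Products lie in C² = span(e2, e3), and C² · C = 0; moreover C · C² ⊆ K e3 and C · e3 = 0.
Hence every product of four elements vanishes, and
so does every term of both defining identities of a Malcev dialgebra. The binary Leibniz
identity fails because ⟨e1 + e4, e4, e1 + e4⟩ = -e3.
-/

section

variable {K : Type*} [Field K]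

lemma mulC_apply_zero (v w : Fin 4 → K) : mulC v w 0 = 0 := rfl

lemma mulC_apply_three (v w : Fin 4 → K) : mulC v w 3 = 0 := rfl

lemma mulC_mulC_apply_one (a b c : Fin 4 → K) : mulC a (mulC b c) 1 = 0 := by
  simp [mulC]

lemma mulC_eq_zero_of_left {v : Fin 4 → K} (hv0 : v 0 = 0) (hv3 : v 3 = 0) (w : Fin 4 → K) :
    mulC v w = 0 := by
  funext i
  fin_cases i <;> simp [mulC, hv0, hv3]

lemma mulC_eq_zero_of_right (v : Fin 4 → K) {w : Fin 4 → K}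
    (hw0 : w 0 = 0) (hw1 : w 1 = 0) (hw3 : w 3 = 0) : mulC v w = 0 := by
  funext i
  fin_cases i <;> simp [mulC, hw0, hw1, hw3]

@[simp]
lemma zero_mulC (w : Fin 4 → K) : mulC 0 w = 0 :=
  mulC_eq_zero_of_left rfl rfl w

@[simp]
lemma mulC_zero (v : Fin 4 → K) : mulC v 0 = 0 :=
  mulC_eq_zero_of_right v rfl rfl rfl

@[simp]
lemma mulC_mulC_left_eq_zero (a b c : Fin 4 → K) : mulC (mulC a b) c = 0 :=
  mulC_eq_zero_of_left (mulC_apply_zero a b) (mulC_apply_three a b) c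

@[simp]
lemma mulC_mulC_mulC_right_eq_zero (a b c d : Fin 4 → K) :
    mulC a (mulC b (mulC c d)) = 0 :=
  mulC_eq_zero_of_right a (mulC_apply_zero _ _) (mulC_mulC_apply_one b c d)
    (mulC_apply_three _ _)

lemma ltC_e1_add_e4_e4_e1_add_e4 :
    ltC (Pi.single 0 1 + Pi.single 3 1) (Pi.single 3 1) (Pi.single 0 1 + Pi.single 3 1) =
      -(Pi.single 2 1 : Fin 4 → K) := by
  funext i
  fin_cases i <;> simp [ltC, mulC]

end

theorem stmt_18_general {K : Type*} [Field K] :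
    -- nilpotency of index 4: every product of four elements vanishes
    (∀ a b c d : Fin 4 → K,
      mulC (mulC (mulC a b) c) d = 0 ∧
      mulC (mulC a (mulC b c)) d = 0 ∧
      mulC (mulC a b) (mulC c d) = 0 ∧
      mulC a (mulC (mulC b c) d) = 0 ∧
      mulC a (mulC b (mulC c d)) = 0) ∧
    -- left anticommutativity
    (∀ a b c : Fin 4 → K, mulC (mulC a b) c + mulC (mulC b a) c = 0) ∧
    -- di-Malcev identity
    (∀ a b c d : Fin 4 → K,
      mulC a (mulC b (mulC c d)) - mulC b (mulC c (mulC a d))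
        - mulC c (mulC (mulC a b) d) - mulC (mulC a c) (mulC b d)
        - mulC (mulC a (mulC b c)) d = 0) ∧
    -- C is not a binary Leibniz algebra
    ltC (Pi.single 0 1 + Pi.single 3 1) (Pi.single 3 1) (Pi.single 0 1 + Pi.single 3 1) ≠
      (0 : Fin 4 → K) := by
  refine ⟨fun _ _ _ _ => by simp, fun _ _ _ => by simp, fun _ _ _ _ => by simp, ?_⟩
  rw [ltC_e1_add_e4_e4_e1_add_e4, neg_ne_zero]
  exact Pi.single_ne_zero_iff.mpr one_ne_zero

theorem stmt_18 {K : Type*} [Field K] (h2 : (2 : K) ≠ 0) :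
    -- nilpotency of index 4: every product of four elements vanishes
    (∀ a b c d : Fin 4 → K,
      mulC (mulC (mulC a b) c) d = 0 ∧
      mulC (mulC a (mulC b c)) d = 0 ∧
      mulC (mulC a b) (mulC c d) = 0 ∧
      mulC a (mulC (mulC b c) d) = 0 ∧
      mulC a (mulC b (mulC c d)) = 0) ∧
    -- left anticommutativity
    (∀ a b c : Fin 4 → K, mulC (mulC a b) c + mulC (mulC b a) c = 0) ∧
    -- di-Malcev identity
    (∀ a b c d : Fin 4 → K,
      mulC a (mulC b (mulC c d)) - mulC b (mulC c (mulC a d))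
        - mulC c (mulC (mulC a b) d) - mulC (mulC a c) (mulC b d)
        - mulC (mulC a (mulC b c)) d = 0) ∧
    -- C is not a binary Leibniz algebra
    ltC (Pi.single 0 1 + Pi.single 3 1) (Pi.single 3 1) (Pi.single 0 1 + Pi.single 3 1) ≠
      (0 : Fin 4 → K) :=
  stmt_18_general
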